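/- Consider a finite-horizon multi-objective MDP with finite nonempty state type S, finite nonempty action type A, transition probabilities p, rewards R : Fin L → S → A → ℝ, and horizon T ≥ 1, with V* the values of the FLMDP backward recursion. Then at the last decision epoch t = T−1, for every deterministic Markov policy π and every state s, the vector (V^π_1(T−1,s), …, V^π_L(T−1,s)) = (R_1(s, π_{T−1}(s)), …, R_L(s, π_{T−1}(s))) is lexicographically less than or equal to (V*_1(T−1,s), …, V*_L(T−1,s)). -/

import Mathlib

open Classical

/-- Value functions of a deterministic Markov policy `pol` in a finite-horizon
multi-objective MDP, by backward recursion: `V^π_i(T,s) = 0` and, for `t < T`,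
`V^π_i(t,s) = R_i(s, π_t(s)) + ∑_{s'} p s (π_t(s)) s' · V^π_i(t+1,s')`. -/
noncomputable def Vpol {S A : Type*} [Fintype S] (p : S → A → S → ℝ) {L : ℕ}
    (R : Fin L → S → A → ℝ) (T : ℕ) (pol : ℕ → S → A) : ℕ → Fin L → S → ℝ
  | t => fun i s =>
    if h : t < T then
      R i s (pol t s) + ∑ s', p s (pol t s) s' * Vpol p R T pol (t + 1) i s'
    else 0
  termination_by t => T - t
  decreasing_by omega

/-- The FLMDP optimal value functions `V*`, by backward recursion: `V*_i(T,s) = 0`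
and, for `t < T`, `V*_i(t,s) = max_{a ∈ A_{i-1}(t,s)} Q_i(t,s,a)` where
`Q_i(t,s,a) = R_i(s,a) + ∑_{s'} p s a s' · V*_i(t+1,s')`, `A_0(t,s) = A`, and
`A_i(t,s)` is the set of maximizers of `Q_i(t,s,·)` over `A_{i-1}(t,s)`
(indices written 0-based via `Fin L`). -/
noncomputable def Vstar {S A : Type*} [Fintype S] [Fintype A] (p : S → A → S → ℝ) {L : ℕ}
    (R : Fin L → S → A → ℝ) (T : ℕ) : ℕ → Fin L → S → ℝ
  | t => fun i s =>
    if h : t < T then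
      sSup ((fun a => R i s a + ∑ s', p s a s' * Vstar p R T (t + 1) i s') ''
        ↑(Nat.rec (motive := fun _ => S → Finset A) (fun _ => (Finset.univ : Finset A))
            (fun j prev s => (prev s).filter fun a =>
              if hj : j < L then
                ∀ a' ∈ prev s,
                  (R ⟨j, hj⟩ s a' + ∑ s', p s a' s' * Vstar p R T (t + 1) ⟨j, hj⟩ s') ≤
                    (R ⟨j, hj⟩ s a + ∑ s', p s a s' * Vstar p R T (t + 1) ⟨j, hj⟩ s')
              else True)
            (i : ℕ) s))
    else 0
  termination_by t => T - t
  decreasing_by all_goals omega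

/-- The FLMDP state-action values `Q_i(t,s,a) = R_i(s,a) + ∑_{s'} p s a s' · V*_i(t+1,s')`
(0-based `i`). -/
noncomputable def Qstar {S A : Type*} [Fintype S] [Fintype A] (p : S → A → S → ℝ) {L : ℕ}
    (R : Fin L → S → A → ℝ) (T : ℕ) (t : ℕ) (i : Fin L) (s : S) (a : A) : ℝ :=
  R i s a + ∑ s', p s a s' * Vstar p R T (t + 1) i s'

/-- The FLMDP restricted action sets: `A_0(t,s) = A` and
`A_{j+1}(t,s) = {a ∈ A_j(t,s) : Q_{j+1}(t,s,a) maximal over A_j(t,s)}`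
(the `Q` index written 0-based). -/
noncomputable def Aset {S A : Type*} [Fintype S] [Fintype A] (p : S → A → S → ℝ) {L : ℕ}
    (R : Fin L → S → A → ℝ) (T : ℕ) (t : ℕ) : ℕ → S → Finset A
  | 0, _ => Finset.univ
  | j + 1, s =>
    if hj : j < L then
      (Aset p R T t j s).filter fun a =>
        ∀ a' ∈ Aset p R T t j s, Qstar p R T t ⟨j, hj⟩ s a' ≤ Qstar p R T t ⟨j, hj⟩ s a
    else Aset p R T t j s

/-!
At the last epoch every continuation value vanishes, so `V^π(T-1, s) = R(s, b)` with
`b = π_{T-1}(s)`, and `R(s, b) = Q(T-1, s, b)`. It therefore suffices to show that at every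
epoch each action's `Q`-vector is lexicographically below `V*`: if `Q_j(a) = V*_j` for all
`j < i`, then `a` survived the first `i` filtering rounds, so `a ∈ A_i` and
`Q_i(a) ≤ max_{A_i} Q_i = V*_i`.
-/

theorem Pi.toLex_le_of_apply_le {ι : Type*} {β : ι → Type*} [LinearOrder ι] [WellFoundedLT ι]
    [∀ i, PartialOrder (β i)] {x y : ∀ i, β i}
    (h : ∀ i, (∀ j < i, x j = y j) → x i ≤ y i) : toLex x ≤ toLex y := by
  by_cases hxy : x = y
  · rw [hxy]
  obtain ⟨i, hi, hmin⟩ := IsWellFounded.wf.has_min (r := (· < ·)) {i | x i ≠ y i}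
    (Function.ne_iff.1 hxy)
  have hprefix : ∀ j < i, x j = y j := fun j hj => by
    by_contra hj'
    exact hmin j hj' hj
  exact le_of_lt ⟨i, hprefix, (h i hprefix).lt_of_ne hi⟩

section FLMDP

variable {S A : Type*} [Fintype S] (p : S → A → S → ℝ) {L : ℕ} (R : Fin L → S → A → ℝ) (T : ℕ)

theorem Vpol_of_ge (pol : ℕ → S → A) {t : ℕ} (ht : T ≤ t) (i : Fin L) (s : S) :
    Vpol p R T pol t i s = 0 := by
  rw [Vpol]
  beta_reduce
  rw [dif_neg (by omega)]

theorem Vpol_of_succ_eq (pol : ℕ → S → A) {t : ℕ} (ht : t + 1 = T) (i : Fin L) (s : S) :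
    Vpol p R T pol t i s = R i s (pol t s) := by
  rw [Vpol]
  beta_reduce
  rw [dif_pos (by omega)]
  simp only [Vpol_of_ge p R T pol ht.ge, mul_zero, Finset.sum_const_zero, add_zero]

variable [Fintype A]

theorem Vstar_self (i : Fin L) (s : S) : Vstar p R T T i s = 0 := by
  rw [Vstar]
  beta_reduce
  rw [dif_neg (lt_irrefl T)]

theorem Qstar_of_succ_eq {t : ℕ} (ht : t + 1 = T) (i : Fin L) (s : S) (a : A) :
    Qstar p R T t i s a = R i s a := by
  simp only [Qstar, ht, Vstar_self, mul_zero, Finset.sum_const_zero, add_zero]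

theorem natRec_eq_Aset (t : ℕ) : ∀ n : ℕ,
    (Nat.rec (motive := fun _ => S → Finset A) (fun _ => (Finset.univ : Finset A))
      (fun j prev s => (prev s).filter fun a =>
        if hj : j < L then
          ∀ a' ∈ prev s,
            (R ⟨j, hj⟩ s a' + ∑ s', p s a' s' * Vstar p R T (t + 1) ⟨j, hj⟩ s') ≤
              (R ⟨j, hj⟩ s a + ∑ s', p s a s' * Vstar p R T (t + 1) ⟨j, hj⟩ s')
        else True) n) = Aset p R T t n
  | 0 => rfl
  | n + 1 => by
    funext s
    show Finset.filter _ _ = _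
    rw [natRec_eq_Aset t n, Aset]
    by_cases hj : n < L
    · simp only [hj, dif_pos]
      rfl
    · simp [hj]

theorem Vstar_eq_sSup {t : ℕ} (ht : t < T) (i : Fin L) (s : S) :
    Vstar p R T t i s = sSup (Qstar p R T t i s '' ↑(Aset p R T t i s)) := by
  rw [Vstar]
  beta_reduce
  rw [dif_pos ht, natRec_eq_Aset]
  rfl

theorem Qstar_le_Vstar {t : ℕ} (ht : t < T) (i : Fin L) (s : S) {a : A}
    (ha : a ∈ Aset p R T t i s) : Qstar p R T t i s a ≤ Vstar p R T t i s := by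
  rw [Vstar_eq_sSup p R T ht]
  exact le_csSup ((Aset p R T t i s).finite_toSet.image _).bddAbove ⟨a, ha, rfl⟩

theorem mem_Aset_of_Qstar_eq_Vstar {t : ℕ} (ht : t < T) (s : S) {a : A} :
    ∀ j : ℕ, (∀ i : Fin L, (i : ℕ) < j → Qstar p R T t i s a = Vstar p R T t i s) →
      a ∈ Aset p R T t j s
  | 0, _ => Finset.mem_univ a
  | j + 1, heq => by
    have ha : a ∈ Aset p R T t j s :=
      mem_Aset_of_Qstar_eq_Vstar ht s j fun i hi => heq i (by omega)
    rw [Aset]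
    split_ifs with hj
    · refine Finset.mem_filter.2 ⟨ha, fun a' ha' => ?_⟩
      rw [heq ⟨j, hj⟩ (Nat.lt_succ_self j)]
      exact Qstar_le_Vstar p R T ht ⟨j, hj⟩ s ha'
    · exact ha

theorem toLex_Qstar_le_Vstar {t : ℕ} (ht : t < T) (s : S) (a : A) :
    toLex (fun i => Qstar p R T t i s a) ≤ toLex (fun i => Vstar p R T t i s) :=
  Pi.toLex_le_of_apply_le fun i hprefix =>
    Qstar_le_Vstar p R T ht i s (mem_Aset_of_Qstar_eq_Vstar p R T ht s i hprefix)

end FLMDP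

theorem last_epoch_lex_le_general
    {S A : Type*} [Fintype S] [Fintype A]
    (p : S → A → S → ℝ)
    {L : ℕ} (R : Fin L → S → A → ℝ) (T : ℕ) (hT : 1 ≤ T)
    (pol : ℕ → S → A) (s : S) :
    (∀ i : Fin L, Vpol p R T pol (T - 1) i s = R i s (pol (T - 1) s)) ∧
    toLex (fun i => Vpol p R T pol (T - 1) i s) ≤
      toLex (fun i => Vstar p R T (T - 1) i s) := by
  have hlast : T - 1 + 1 = T := by omega
  have hVpol : ∀ i, Vpol p R T pol (T - 1) i s = R i s (pol (T - 1) s) :=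
    fun i => Vpol_of_succ_eq p R T pol hlast i s
  refine ⟨hVpol, ?_⟩
  have hQ := toLex_Qstar_le_Vstar p R T (Nat.sub_one_lt_of_le hT le_rfl) s (pol (T - 1) s)
  simpa only [Qstar_of_succ_eq p R T hlast, ← hVpol] using hQ

/-- at the last decision epoch `t = T - 1`, for every policy `π` and state
`s`, the value vector equals `(R_1(s, π_{T-1}(s)), …, R_L(s, π_{T-1}(s)))` and is
lexicographically less than or equal to `(V*_1(T-1,s), …, V*_L(T-1,s))`. -/
theorem last_epoch_lex_le
    {S A : Type*} [Fintype S] [Fintype A] [Nonempty S] [Nonempty A]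
    (p : S → A → S → ℝ)
    (hp0 : ∀ s a s', 0 ≤ p s a s') (hp1 : ∀ s a, ∑ s', p s a s' = 1)
    {L : ℕ} (R : Fin L → S → A → ℝ) (T : ℕ) (hT : 1 ≤ T)
    (pol : ℕ → S → A) (s : S) :
    (∀ i : Fin L, Vpol p R T pol (T - 1) i s = R i s (pol (T - 1) s)) ∧
    toLex (fun i => Vpol p R T pol (T - 1) i s) ≤
      toLex (fun i => Vstar p R T (T - 1) i s) :=
  last_epoch_lex_le_general p R T hT pol s
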